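/- With $A, \Gamma_A, L_A$ and the Blaschke coefficients $U_0 = -AL_A^{1/2}$, $U_j = A^{*(j-1)}\Gamma_A^{-1}L_A^{1/2}$ ($j\ge1$) as above, for every $n \ge 1$ the shifted sequence is orthogonal to the original: $\sum_{j=0}^\infty U_j^* U_{j+n}' = 0$, where $U'$ denotes the coefficients of $Z^n U_A(Z)$; explicitly, $-L_A^{1/2}\Gamma_A^{-1}A^{n-1}AL_A^{1/2} + \sum_{j=0}^\infty L_A^{1/2}\Gamma_A^{-1}A^{n+j}A^{*j}\Gamma_A^{-1}L_A^{1/2} = 0$. -/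

import Mathlib

open scoped ENNReal Matrix ComplexOrder

attribute [local instance] Matrix.linftyOpNormedRing Matrix.linftyOpNormedAlgebra

/-- The positive semidefinite square root of a positive semidefinite matrix
(the definition `Matrix.PosSemidef.sqrt` of the older Mathlib, since removed). -/
noncomputable def Matrix.PosSemidef.sqrt {n : Type*} [Fintype n] [DecidableEq n] {𝕜 : Type*} [RCLike 𝕜]
    {A : Matrix n n 𝕜} (hA : A.PosSemidef) : Matrix n n 𝕜 :=
  hA.1.eigenvectorUnitary.1 * Matrix.diagonal ((↑) ∘ (√·) ∘ hA.1.eigenvalues) *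
    (star hA.1.eigenvectorUnitary : Matrix n n 𝕜)

/-!
By Gelfand's formula `‖Aʲ‖` decays geometrically, so `Γ = ∑ Aʲ A*ʲ` converges. Writing
`A^{n+j} A*ʲ = Aⁿ (Aʲ A*ʲ)`, the series in the statement sums to `Γ⁻¹ Aⁿ Γ Γ⁻¹ = Γ⁻¹ Aⁿ`,
which cancels the first term.
-/

open scoped NNReal
open Filter

theorem exists_lt_one_eventually_nnnorm_pow_le {𝓐 : Type*} [NormedRing 𝓐] [NormedAlgebra ℂ 𝓐]
    [CompleteSpace 𝓐] {a : 𝓐} (ha : spectralRadius ℂ a < 1) :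
    ∃ r : ℝ≥0, r < 1 ∧ ∀ᶠ k in atTop, ‖a ^ k‖₊ ≤ r ^ k := by
  obtain ⟨r, hr_gt, hr_lt⟩ := exists_between ha
  lift r to ℝ≥0 using hr_lt.ne_top
  refine ⟨r, mod_cast hr_lt, ?_⟩
  have hroot : ∀ᶠ k : ℕ in atTop, (‖a ^ k‖₊ : ℝ≥0∞) ^ (1 / (k : ℝ)) < r :=
    (spectrum.pow_nnnorm_pow_one_div_tendsto_nhds_spectralRadius a).eventually_lt_const hr_gt
  filter_upwards [hroot, eventually_ne_atTop 0] with k hk hk0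
  have hpow := ENNReal.rpow_le_rpow hk.le (Nat.cast_nonneg k)
  rw [← ENNReal.rpow_mul, one_div_mul_cancel (Nat.cast_ne_zero.mpr hk0), ENNReal.rpow_one,
    ENNReal.rpow_natCast] at hpow
  exact mod_cast hpow

namespace Matrix

variable {m n : Type*} [Fintype m] [Fintype n]

section

attribute [local instance] Matrix.linftyOpSeminormedAddCommGroup

theorem linfty_opNNNorm_conjTranspose_le {α : Type*} [SeminormedAddCommGroup α]
    [StarAddMonoid α] [NormedStarGroup α] (B : Matrix m n α) : ‖Bᴴ‖₊ ≤ Fintype.card m * ‖B‖₊ := by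
  have hentry : ∀ i j, ‖B i j‖₊ ≤ ‖B‖₊ := fun i j => calc
    ‖B i j‖₊ ≤ ∑ j', ‖B i j'‖₊ :=
      Finset.single_le_sum (f := fun j' => ‖B i j'‖₊) (fun _ _ => zero_le) (Finset.mem_univ j)
    _ ≤ ‖B‖₊ := by
      rw [linfty_opNNNorm_def B]
      exact Finset.le_sup (f := fun i => ∑ j, ‖B i j‖₊) (Finset.mem_univ i)
  rw [linfty_opNNNorm_def]
  refine Finset.sup_le fun j _ => ?_
  calc ∑ i, ‖Bᴴ j i‖₊ ≤ ∑ _i : m, ‖B‖₊ :=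
        Finset.sum_le_sum fun i _ => by simpa [conjTranspose_apply] using hentry i j
    _ = Fintype.card m * ‖B‖₊ := by simp

end

theorem summable_pow_mul_conjTranspose_pow [DecidableEq n] {A : Matrix n n ℂ}
    (hA : spectralRadius ℂ A < 1) : Summable fun j : ℕ => A ^ j * Aᴴ ^ j := by
  obtain ⟨r, hr, hpow⟩ := exists_lt_one_eventually_nnnorm_pow_le hA
  have hr2 : (r : ℝ) ^ 2 < 1 := by
    rw [sq_lt_one_iff₀ r.coe_nonneg]
    exact_mod_cast hr
  refine Summable.of_norm_bounded_eventually_nat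
    ((summable_geometric_of_lt_one (by positivity) hr2).mul_left (Fintype.card n : ℝ)) ?_
  filter_upwards [hpow] with k hk
  have hbound : ‖A ^ k * Aᴴ ^ k‖₊ ≤ Fintype.card n * ((r : ℝ≥0) ^ 2) ^ k := calc
    ‖A ^ k * Aᴴ ^ k‖₊ ≤ ‖A ^ k‖₊ * ‖(A ^ k)ᴴ‖₊ := by
      rw [conjTranspose_pow]
      exact linfty_opNNNorm_mul _ _
    _ ≤ r ^ k * (Fintype.card n * r ^ k) := by
      gcongr
      exact (linfty_opNNNorm_conjTranspose_le _).trans (by gcongr)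
    _ = Fintype.card n * (r ^ 2) ^ k := by ring
  exact_mod_cast hbound

theorem nonsing_inv_mul_mul_mul_nonsing_inv [DecidableEq n] {α : Type*} [CommRing α]
    (M X : Matrix n n α) : M⁻¹ * X * (M * M⁻¹) = M⁻¹ * X := by
  by_cases hM : IsUnit M.det
  · rw [mul_nonsing_inv M hM, mul_one]
  · simp [nonsing_inv_apply_not_isUnit M hM]

theorem tsum_mul_inv_mul_pow_add_mul_conjTranspose_pow [DecidableEq n] {𝕜 : Type*} [RCLike 𝕜]
    {A Γ : Matrix n n 𝕜} (hΓ : HasSum (fun j : ℕ => A ^ j * Aᴴ ^ j) Γ) (S T : Matrix n n 𝕜)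
    (k : ℕ) : ∑' j : ℕ, S * Γ⁻¹ * A ^ (k + j) * Aᴴ ^ j * Γ⁻¹ * T = S * Γ⁻¹ * A ^ k * T := by
  have hfactor : ∀ j : ℕ, S * Γ⁻¹ * A ^ (k + j) * Aᴴ ^ j * Γ⁻¹ * T =
      S * Γ⁻¹ * A ^ k * (A ^ j * Aᴴ ^ j) * (Γ⁻¹ * T) := fun j => by
    simp only [pow_add, Matrix.mul_assoc]
  calc ∑' j : ℕ, S * Γ⁻¹ * A ^ (k + j) * Aᴴ ^ j * Γ⁻¹ * T
      = S * Γ⁻¹ * A ^ k * Γ * (Γ⁻¹ * T) := by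
        rw [tsum_congr hfactor, ((hΓ.mul_left _).mul_right _).tsum_eq]
    _ = S * (Γ⁻¹ * A ^ k * (Γ * Γ⁻¹)) * T := by simp only [Matrix.mul_assoc]
    _ = S * Γ⁻¹ * A ^ k * T := by
        rw [nonsing_inv_mul_mul_mul_nonsing_inv]
        simp only [Matrix.mul_assoc]

end Matrix

theorem stmt9_general {p : ℕ} (A : Matrix (Fin p) (Fin p) ℂ)
    (hA : spectralRadius ℂ A < 1)
    (Γ : Matrix (Fin p) (Fin p) ℂ) (hΓ : Γ = ∑' n : ℕ, A ^ n * Aᴴ ^ n)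
    (L : Matrix (Fin p) (Fin p) ℂ)
    (hLpsd : L.PosSemidef)
    (n : ℕ) (hn : 1 ≤ n) :
    -(hLpsd.sqrt * Γ⁻¹ * A ^ (n - 1) * A * hLpsd.sqrt) +
      ∑' j : ℕ, hLpsd.sqrt * Γ⁻¹ * A ^ (n + j) * Aᴴ ^ j * Γ⁻¹ * hLpsd.sqrt = 0 := by
  have hΓsum : HasSum (fun j : ℕ => A ^ j * Aᴴ ^ j) Γ :=
    hΓ ▸ (Matrix.summable_pow_mul_conjTranspose_pow hA).hasSum
  rw [Matrix.mul_assoc _ (A ^ (n - 1)) A, pow_sub_one_mul (Nat.one_le_iff_ne_zero.mp hn),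
    Matrix.tsum_mul_inv_mul_pow_add_mul_conjTranspose_pow hΓsum, neg_add_cancel]

/-- Orthogonality of the Blaschke factor to its shifts: for every `n ≥ 1`,
`-L^{1/2} Γ⁻¹ A^{n-1} A L^{1/2} + ∑ⱼ L^{1/2} Γ⁻¹ A^{n+j} A*ʲ Γ⁻¹ L^{1/2} = 0`. -/
theorem stmt9 {p : ℕ} (A : Matrix (Fin p) (Fin p) ℂ)
    (hA : spectralRadius ℂ A < 1)
    (Γ : Matrix (Fin p) (Fin p) ℂ) (hΓ : Γ = ∑' n : ℕ, A ^ n * Aᴴ ^ n)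
    (L : Matrix (Fin p) (Fin p) ℂ) (hL : L⁻¹ = Aᴴ * A + Γ⁻¹)
    (hLpsd : L.PosSemidef)
    (n : ℕ) (hn : 1 ≤ n) :
    -(hLpsd.sqrt * Γ⁻¹ * A ^ (n - 1) * A * hLpsd.sqrt) +
      ∑' j : ℕ, hLpsd.sqrt * Γ⁻¹ * A ^ (n + j) * Aᴴ ^ j * Γ⁻¹ * hLpsd.sqrt = 0 :=
  stmt9_general A hA Γ hΓ L hLpsd n hn
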